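/- Let T be a consistent theory in a countable first-order language. Suppose there is a family (p_A)_{A ⊆ ω} of partial types of T over the empty set, indexed by subsets of ω, such that each p_A is consistent with T and any two distinct p_A, p_B are jointly inconsistent (no element of any model can realise both). Then T has exactly 2^{ℵ₀} pairwise non-isomorphic countable models. -/

import Mathlib

/-!
Each `p_A` is finitely satisfiable, so by compactness (for `T` together with `p_A` applied to a
new constant) and downward Löwenheim–Skolem it is realized in a countable model `M_A`. A countable
model realizes only countably many of the pairwise inconsistent `p_A`, so `A ↦ [M_A]` has countable
fibres and there are at least `2 ^ ℵ₀` isomorphism classes. Conversely, a countable model is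
determined up to isomorphism by the set of formulas in variables `ℕ` satisfied by an enumeration of
it, and there are only `2 ^ ℵ₀` such sets.
-/

open FirstOrder FirstOrder.Language Cardinal

universe u v

theorem Cardinal.two_power_aleph0_le_mk_of_countable_fibers {β : Type*} (f : Set ℕ → β)
    (hf : ∀ b, (f ⁻¹' {b}).Countable) : 2 ^ ℵ₀ ≤ #β := by
  have h := lift_mk_le_lift_mk_mul_of_lift_mk_preimage_le f (c := ℵ₀) fun b =>
    lift_le_aleph0.2 (hf b).le_aleph0
  simp only [mk_set, mk_nat, lift_two_power, lift_aleph0, lift_uzero] at h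
  rcases le_max_iff.1 (h.trans (mul_le_max_of_aleph0_le_right le_rfl)) with h | h
  · exact h
  · exact absurd h (cantor ℵ₀).not_ge

namespace FirstOrder.Language

variable {L : Language.{u, v}}

theorem nonempty_equiv_of_realize_iff {α M N : Type*} [L.Structure M] [L.Structure N]
    {f : α → M} {g : α → N} (hf : f.Surjective) (hg : g.Surjective)
    (h : ∀ φ : L.Formula α, φ.Realize f ↔ φ.Realize g) : Nonempty (M ≃[L] N) := by
  have h_eq (i j : α) : f i = f j ↔ g i = g j := by
    simpa using h ((Term.var i).equal (Term.var j))
  have h_fun {n} (F : L.Functions n) (i : Fin n → α) (j : α) :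
      f j = Structure.funMap F (f ∘ i) ↔ g j = Structure.funMap F (g ∘ i) := by
    simpa [Function.comp_def] using h ((Term.var j).equal (Term.func F fun m => Term.var (i m)))
  have h_rel {n} (R : L.Relations n) (i : Fin n → α) :
      Structure.RelMap R (f ∘ i) ↔ Structure.RelMap R (g ∘ i) := by
    simpa [Function.comp_def] using h (R.formula fun m => Term.var (i m))
  set e : M → N := g ∘ Function.surjInv hf
  set e' : N → M := f ∘ Function.surjInv hg
  have he (i : α) : e (f i) = g i := (h_eq _ _).1 (Function.surjInv_eq hf (f i))
  have he' (i : α) : e' (g i) = f i := (h_eq _ _).2 (Function.surjInv_eq hg (g i))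
  have he_comp {n : ℕ} (i : Fin n → α) : e ∘ f ∘ i = g ∘ i := funext fun m => he (i m)
  refine ⟨{ toFun := e, invFun := e',
            left_inv := hf.forall.2 fun i => by simp only [he, he'],
            right_inv := hg.forall.2 fun i => by simp only [he, he'],
            map_fun' := fun F => hf.comp_left.forall.2 fun i => ?_,
            map_rel' := fun R => hf.comp_left.forall.2 fun i => ?_ }⟩
  · obtain ⟨j, hj⟩ := hf (Structure.funMap F (f ∘ i))
    rw [← hj, he, he_comp]
    exact (h_fun F i j).1 hj
  · simp only [he_comp, h_rel]

theorem mk_quot_nonempty_equiv_le [Countable L.Symbols] {ι : Type*} (M : ι → Type*)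
    [∀ i, L.Structure (M i)] [∀ i, Countable (M i)] [∀ i, Nonempty (M i)] :
    #(Quot fun i j => Nonempty (M i ≃[L] M j)) ≤ 2 ^ ℵ₀ := by
  choose enum henum using fun i => exists_surjective_nat (M i)
  let diagram (c : Quot fun i j => Nonempty (M i ≃[L] M j)) : Set (L.Formula ℕ) :=
    {φ | φ.Realize (enum c.out)}
  have hinj : diagram.Injective := fun c d h => by
    rw [← Quot.out_eq c, ← Quot.out_eq d]
    exact Quot.sound (nonempty_equiv_of_realize_iff (henum _) (henum _) (Set.ext_iff.1 h))
  have h_card : #(Set (L.Formula ℕ)) ≤ 2 ^ ℵ₀ :=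
    mk_set.trans_le (power_le_power_left two_ne_zero mk_le_aleph0)
  simpa [lift_two_power] using (lift_mk_le_lift_mk_of_injective hinj).trans (lift_le.2 h_card)

namespace Theory

theorem IsSatisfiable.exists_countable_model [Countable L.Symbols] {T : L.Theory}
    (h : T.IsSatisfiable) : ∃ M : ModelType.{u, v, max u v} T, Countable M := by
  obtain ⟨M⟩ := h
  by_cases hM : Infinite M
  · obtain ⟨N, hN⟩ := exists_model_card_eq ⟨M, hM⟩ ℵ₀ le_rfl (lift_le.2 mk_le_aleph0)
    exact ⟨N, mk_le_aleph0_iff.1 hN.le⟩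
  · exact ⟨M, (not_infinite_iff_finite.1 hM).to_countable⟩

theorem isSatisfiable_onTheory_union_equivSentence_image {α : Type} {T : L.Theory}
    {s : Set (L.Formula α)} (M : T.ModelType) (a : α → M) (ha : ∀ ψ ∈ s, ψ.Realize a) :
    ((L.lhomWithConstants α).onTheory T ∪ Formula.equivSentence '' s).IsSatisfiable := by
  let := constantsOn.structure a
  have : M ⊨ (L.lhomWithConstants α).onTheory T ∪ Formula.equivSentence '' s :=
    ((LHom.onTheory_model _ _).2 inferInstance).union
      ⟨by rintro _ ⟨ψ, hψ, rfl⟩; exact (Formula.realize_equivSentence _ _).2 (ha ψ hψ)⟩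
  exact Model.isSatisfiable M

theorem exists_countable_model_realizing [Countable L.Symbols] {α : Type} [Countable α]
    {T : L.Theory} {q : Set (L.Formula α)}
    (hq : ∀ s : Finset (L.Formula α), ↑s ⊆ q →
      ∃ (M : ModelType.{u, v, max u v} T) (a : α → M), ∀ ψ ∈ s, ψ.Realize a) :
    ∃ M : ModelType.{u, v, max u v} T, Countable M ∧ ∃ a : α → M, ∀ ψ ∈ q, ψ.Realize a := by
  have hsat :
      ((L.lhomWithConstants α).onTheory T ∪ Formula.equivSentence '' q).IsSatisfiable := by
    refine isSatisfiable_iff_isFinitelySatisfiable.2 fun T0 hT0 => ?_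
    classical
    let s := (T0.preimage Formula.equivSentence Formula.equivSentence.injective.injOn).filter
      (· ∈ q)
    obtain ⟨M, a, ha⟩ := hq s fun ψ hψ => (Finset.mem_filter.1 hψ).2
    refine (isSatisfiable_onTheory_union_equivSentence_image (s := ↑s) M a ha).mono
      fun φ hφ => ?_
    rcases hT0 hφ with hT | ⟨ψ, hψ, rfl⟩
    · exact Or.inl hT
    · exact Or.inr ⟨ψ, by simp [s, hψ, Finset.mem_coe.1 hφ], rfl⟩
  obtain ⟨M, hM⟩ := hsat.exists_countable_model
  let := (L.lhomWithConstants α).reduct M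
  have := LHom.isExpansionOn_reduct (L.lhomWithConstants α) M
  refine ⟨(M.subtheoryModel Set.subset_union_left).reduct _, hM, fun a => (L.con a : M),
    fun ψ hψ => ?_⟩
  exact (Formula.realize_equivSentence M ψ).1
    (M.is_model.realize_of_mem _ (Or.inr ⟨ψ, hψ, rfl⟩))

end Theory

theorem countable_setOf_exists_realize {ι α M : Type*} [L.Structure M] [Countable M] [Finite α]
    (p : ι → Set (L.Formula α))
    (hp : ∀ i j, i ≠ j → ∀ a : α → M,
      ¬((∀ ψ ∈ p i, ψ.Realize a) ∧ ∀ ψ ∈ p j, ψ.Realize a)) :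
    {i | ∃ a : α → M, ∀ ψ ∈ p i, ψ.Realize a}.Countable := by
  rw [Set.ofPred_exists]
  exact Set.countable_iUnion fun a => Set.Subsingleton.countable fun i hi j hj =>
    by_contra fun hij => hp i j hij a ⟨hi, hj⟩

theorem Equiv.exists_forall_realize_iff {α M N : Type*} [L.Structure M] [L.Structure N]
    (e : M ≃[L] N) (q : Set (L.Formula α)) :
    (∃ a : α → M, ∀ ψ ∈ q, ψ.Realize a) ↔ ∃ a : α → N, ∀ ψ ∈ q, ψ.Realize a := by
  refine ⟨fun ⟨a, ha⟩ => ⟨e ∘ a, fun ψ hψ => ?_⟩,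
    fun ⟨a, ha⟩ => ⟨e.symm ∘ a, fun ψ hψ => ?_⟩⟩
  · exact (StrongHomClass.realize_formula e ψ).2 (ha ψ hψ)
  · exact (StrongHomClass.realize_formula e.symm ψ).2 (ha ψ hψ)

end FirstOrder.Language

theorem stmt_4_general {L : FirstOrder.Language.{u, v}} [Countable L.Symbols] (T : L.Theory)
    (p : Set ℕ → Set (L.Formula Unit))
    (hcons : ∀ A : Set ℕ, ∀ s : Finset (L.Formula Unit), ↑s ⊆ p A →
      ∃ (M : Theory.ModelType.{u, v, max u v} T) (a : Unit → M.Carrier),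
        ∀ ψ ∈ s, ψ.Realize a)
    (hinc : ∀ A B : Set ℕ, A ≠ B →
      ∀ (M : Theory.ModelType.{u, v, max u v} T) (a : Unit → M.Carrier),
        ¬ ((∀ ψ ∈ p A, ψ.Realize a) ∧ (∀ ψ ∈ p B, ψ.Realize a))) :
    Cardinal.mk
      (Quot fun M N : {M : Theory.ModelType.{u, v, max u v} T // Countable M.Carrier} =>
        Nonempty (M.1.Carrier ≃[L] N.1.Carrier)) = 2 ^ aleph0 := by
  have (N : {M : Theory.ModelType.{u, v, max u v} T // Countable M}) : Countable N.1 := N.2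
  refine le_antisymm
    (mk_quot_nonempty_equiv_le fun N : {M : Theory.ModelType T // Countable M} => N.1) ?_
  choose M hM_countable hM_realize using fun A => Theory.exists_countable_model_realizing (hcons A)
  let realizedTypes := Quot.lift
    (fun N : {M : Theory.ModelType.{u, v, max u v} T // Countable M} =>
      {A | ∃ a : Unit → N.1, ∀ ψ ∈ p A, ψ.Realize a})
    fun N N' (⟨e⟩ : Nonempty (N.1 ≃[L] N'.1)) =>
      Set.ext fun A => e.exists_forall_realize_iff (p A)
  have h_countable : ∀ c, (realizedTypes c).Countable :=
    Quot.ind fun N => countable_setOf_exists_realize p fun A B hAB => hinc A B hAB N.1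
  refine two_power_aleph0_le_mk_of_countable_fibers (fun A => Quot.mk _ ⟨M A, hM_countable A⟩)
    fun c => (h_countable c).mono ?_
  rintro A rfl
  exact hM_realize A

/-- If a consistent countable theory has a family of partial types indexed by
subsets of `ω`, each consistent with `T` and pairwise jointly inconsistent, then `T` has
exactly `2 ^ ℵ₀` countable models up to isomorphism. -/
theorem stmt_4 {L : FirstOrder.Language.{u, v}} [Countable L.Symbols] (T : L.Theory)
    (hT : T.IsSatisfiable)
    (p : Set ℕ → Set (L.Formula Unit))
    (hcons : ∀ A : Set ℕ, ∀ s : Finset (L.Formula Unit), ↑s ⊆ p A →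
      ∃ (M : Theory.ModelType.{u, v, max u v} T) (a : Unit → M.Carrier),
        ∀ ψ ∈ s, ψ.Realize a)
    (hinc : ∀ A B : Set ℕ, A ≠ B →
      ∀ (M : Theory.ModelType.{u, v, max u v} T) (a : Unit → M.Carrier),
        ¬ ((∀ ψ ∈ p A, ψ.Realize a) ∧ (∀ ψ ∈ p B, ψ.Realize a))) :
    Cardinal.mk
      (Quot fun M N : {M : Theory.ModelType.{u, v, max u v} T // Countable M.Carrier} =>
        Nonempty (M.1.Carrier ≃[L] N.1.Carrier)) = 2 ^ aleph0 :=
  stmt_4_general T p hcons hinc
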